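/- Let α ∈ (0,1) and suppose φ : [0,1] × ℝ^d → ℝ is bounded, ℤ^d-periodic in space, nonincreasing in t, and minimizes J^rel(φ) = ∫₀¹∫_Q L(∂_t φ^ac, ∇φ) + ∫_Q φ(0,·)ρ₀ − ∫_Q φ(1,·)ρ₁ over the class K = {φ ∈ BV ∩ L^∞ : ∂_t φ ≤ 0, ∇φ ∈ L¹}. If M = ess-sup_x φ(1,x) and φ̃ = min{M, φ}, then ∫₀¹∫_Q L(∂_t φ̃^ac, ∇φ̃) ≤ ∫₀¹∫_Q L(∂_t φ^ac, ∇φ), ∫_Q φ̃(0,·)ρ₀ ≤ ∫_Q φ(0,·)ρ₀, and ∫_Q φ̃(1,·)ρ₁ = ∫_Q φ(1,·)ρ₁; consequently φ̃ is also a minimizer. -/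
import Mathlib


open MeasureTheory
open scoped ENNReal
open Classical

/-- `L(a,b)` as an `ℝ≥0∞`-valued integrand:
`κ_α (|b|^{2/α}/(−a))^{α/(1-α)}` if `a < 0`, `0` if `(a,b) = (0,0)`, `+∞` otherwise. -/
noncomputable def Lnn (d : ℕ) (α : ℝ) (a : ℝ) (b : EuclideanSpace ℝ (Fin d)) : ℝ≥0∞ :=
  if a < 0 then
    ENNReal.ofReal
      (((1 - α) * α ^ (α / (1 - α)) / 4 ^ ((1 : ℝ) / (1 - α))) *
        (‖b‖ ^ ((2 : ℝ) / α) / (-a)) ^ (α / (1 - α)))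
  else if a = 0 ∧ b = 0 then 0 else ⊤

/-- truncation of a (minimizing) potential at the level
`M = ess-sup_x φ(1,x)` does not increase any term of the relaxed dual functional
`J^rel`; consequently the truncation `φ̃ = min{M,φ}` is also a minimizer. -/
theorem truncation_of_minimizer (d : ℕ) (hd : 1 ≤ d) (α : ℝ) (hα0 : 0 < α) (hα1 : α < 1)
    (Qs : Set (EuclideanSpace ℝ (Fin d)))
    (hQ : Qs = {x : EuclideanSpace ℝ (Fin d) | ∀ i, |x i| ≤ 1 / 2})
    (S : Set (ℝ × EuclideanSpace ℝ (Fin d))) (hSdef : S = Set.Icc (0 : ℝ) 1 ×ˢ Qs)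
    (φ : ℝ × EuclideanSpace ℝ (Fin d) → ℝ) (hφmeas : Measurable φ)
    (hφbd : ∃ B, ∀ p, |φ p| ≤ B)
    (hφmono : ∀ x, Antitone fun t => φ (t, x))
    (dtφ : ℝ × EuclideanSpace ℝ (Fin d) → ℝ) (hdtφ : ∀ p, dtφ p ≤ 0)
    (gφ : ℝ × EuclideanSpace ℝ (Fin d) → EuclideanSpace ℝ (Fin d))
    (ρ₀ ρ₁ : EuclideanSpace ℝ (Fin d) → ℝ)
    (hρ₀ : ∀ x, 0 ≤ ρ₀ x) (hρ₁ : ∀ x, 0 ≤ ρ₁ x)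
    (hρ₀i : IntegrableOn ρ₀ Qs volume) (hρ₁i : IntegrableOn ρ₁ Qs volume)
    (M : ℝ) (hM : M = essSup (fun x => φ (1, x)) (volume.restrict Qs))
    (φt : ℝ × EuclideanSpace ℝ (Fin d) → ℝ) (hφt : ∀ p, φt p = min M (φ p))
    (dtφt : ℝ × EuclideanSpace ℝ (Fin d) → ℝ)
    (hdtφt : ∀ p, dtφt p = if φ p < M then dtφ p else 0)
    (gφt : ℝ × EuclideanSpace ℝ (Fin d) → EuclideanSpace ℝ (Fin d))
    (hgφt : ∀ p, gφt p = if φ p < M then gφ p else 0) :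
    (∫⁻ p in S, Lnn d α (dtφt p) (gφt p) ≤ ∫⁻ p in S, Lnn d α (dtφ p) (gφ p)) ∧
    (∫ x in Qs, φt (0, x) * ρ₀ x ≤ ∫ x in Qs, φ (0, x) * ρ₀ x) ∧
    (∫ x in Qs, φt (1, x) * ρ₁ x = ∫ x in Qs, φ (1, x) * ρ₁ x) ∧
    ((∫⁻ p in S, Lnn d α (dtφ p) (gφ p)) ≠ ⊤ →
      (∫⁻ p in S, Lnn d α (dtφt p) (gφt p)).toReal +
          (∫ x in Qs, φt (0, x) * ρ₀ x) - ∫ x in Qs, φt (1, x) * ρ₁ x ≤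
        (∫⁻ p in S, Lnn d α (dtφ p) (gφ p)).toReal +
          (∫ x in Qs, φ (0, x) * ρ₀ x) - ∫ x in Qs, φ (1, x) * ρ₁ x) := by

  obtain ⟨B, hB⟩ := hφbd
  set B' : ℝ := max |M| B with hB'
  have hBt : ∀ p, |φt p| ≤ B' := by
    intro p
    rw [hφt]
    rcases le_total M (φ p) with h | h
    · rw [min_eq_left h]; exact le_max_left _ _
    · rw [min_eq_right h]; exact le_trans (hB p) (le_max_right _ _)
  have hB2 : ∀ p, |φ p| ≤ B' := fun p => le_trans (hB p) (le_max_right _ _)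
  -- part 1
  have h1 : ∫⁻ p in S, Lnn d α (dtφt p) (gφt p) ≤ ∫⁻ p in S, Lnn d α (dtφ p) (gφ p) := by
    apply lintegral_mono
    intro p
    simp only []
    rw [hdtφt, hgφt]
    by_cases h : φ p < M
    · simp [h]
    · simp only [h, if_false]
      simp [Lnn]
  -- measurability
  have hmφ : ∀ t : ℝ, Measurable fun x => φ (t, x) := fun t =>
    hφmeas.comp measurable_prodMk_left
  have hmφt : ∀ t : ℝ, Measurable fun x => φt (t, x) := by
    intro t
    have : (fun x => φt (t, x)) = fun x => min M (φ (t, x)) := by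
      funext x; exact hφt (t, x)
    rw [this]
    exact measurable_const.min (hmφ t)
  -- integrability
  have key : ∀ (f : EuclideanSpace ℝ (Fin d) → ℝ) (ρ : EuclideanSpace ℝ (Fin d) → ℝ),
      Measurable f → (∀ x, |f x| ≤ B') → (∀ x, 0 ≤ ρ x) → IntegrableOn ρ Qs volume →
      IntegrableOn (fun x => f x * ρ x) Qs volume := by
    intro f ρ hf hfb hρ hρi
    refine Integrable.mono' (hρi.const_mul B') (hf.aestronglyMeasurable.mul hρi.1) ?_
    filter_upwards with x
    rw [norm_mul, Real.norm_eq_abs, Real.norm_eq_abs, abs_of_nonneg (hρ x)]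
    exact mul_le_mul_of_nonneg_right (hfb x) (hρ x)
  -- part 2
  have h2 : ∫ x in Qs, φt (0, x) * ρ₀ x ≤ ∫ x in Qs, φ (0, x) * ρ₀ x := by
    refine integral_mono (key _ _ (hmφt 0) (fun x => hBt _) hρ₀ hρ₀i)
      (key _ _ (hmφ 0) (fun x => hB2 _) hρ₀ hρ₀i) ?_
    intro x
    have : φt (0, x) ≤ φ (0, x) := by rw [hφt]; exact min_le_right _ _
    exact mul_le_mul_of_nonneg_right this (hρ₀ x)
  -- part 3
  have hae : ∀ᵐ x ∂(volume.restrict Qs), φ (1, x) ≤ M := by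
    rw [hM]
    exact ae_le_essSup (Filter.isBoundedUnder_of ⟨B, fun x => (abs_le.1 (hB _)).2⟩)
  have h3 : ∫ x in Qs, φt (1, x) * ρ₁ x = ∫ x in Qs, φ (1, x) * ρ₁ x := by
    refine integral_congr_ae ?_
    filter_upwards [hae] with x hx
    rw [hφt, min_eq_right hx]
  refine ⟨h1, h2, h3, fun hne => ?_⟩
  have := ENNReal.toReal_mono hne h1
  linarith
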